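/- arXiv:1009.4774 — 3 statements merged into one kernel-verified Lean document; each statement's English description precedes it below -/
import Mathlib

section
/- A balanced tree T is minimal if and only if T contains no node x whose right child y satisfies (γ_T(x), γ_T(y)) ∈ {(1, 1), (1, 0)}. -/
/-- Complete rooted planar binary trees. -/
inductive BTree where
  | leaf : BTree
  | node : BTree → BTree → BTree
  deriving DecidableEq

namespace BTree

/-- The height of a tree. -/
def ht : BTree → ℕ
  | leaf => 0
  | node l r => 1 + max l.ht r.ht

/-- The imbalance value of the root of a tree (`γ`). -/
def imb : BTree → ℤ
  | leaf => 0
  | node l r => (r.ht : ℤ) - l.ht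

/-- A tree is balanced if every node has imbalance value in {-1, 0, 1}. -/
def Balanced : BTree → Prop
  | leaf => True
  | node l r =>
      ((r.ht : ℤ) - l.ht = -1 ∨ (r.ht : ℤ) - l.ht = 0 ∨ (r.ht : ℤ) - l.ht = 1) ∧
      Balanced l ∧ Balanced r

/-- The subtree at a position (`false` = go left, `true` = go right). -/
def subtreeAt : BTree → List Bool → Option BTree
  | t, [] => some t
  | leaf, _ :: _ => none
  | node l _, false :: p => subtreeAt l p
  | node _ r, true :: p => subtreeAt r p

/-- `p` is the position of an internal node of `t`. -/
def IsNodePos (t : BTree) (p : List Bool) : Prop :=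
  ∃ l r, subtreeAt t p = some (node l r)

/-- Right rotation whose root `y` is at position `p`: the subtree
`(A ∧ B) ∧ C` at `p` is replaced by `A ∧ (B ∧ C)`. -/
inductive RotAt : BTree → List Bool → BTree → Prop
  | here (a b c : BTree) : RotAt (node (node a b) c) [] (node a (node b c))
  | left {l l' : BTree} (r : BTree) {p : List Bool} :
      RotAt l p l' → RotAt (node l r) (false :: p) (node l' r)
  | right (l : BTree) {r r' : BTree} {p : List Bool} :
      RotAt r p r' → RotAt (node l r) (true :: p) (node l r')

/-- `t₁` is obtained from `t₀` by a single right rotation (`t₀ ⋌ t₁`). -/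
def Rot (t₀ t₁ : BTree) : Prop := ∃ p, RotAt t₀ p t₁

/-- The Tamari order: reflexive transitive closure of right rotation. -/
def Tamari : BTree → BTree → Prop := Relation.ReflTransGen Rot

/-! A right rotation with root at `p` only replaces the subtree `(A ∧ B) ∧ C` at `p` by
`A ∧ (B ∧ C)`. If `A ∧ (B ∧ C)` is balanced, then `(A ∧ B) ∧ C` is balanced exactly when
`ht A = ht C = ht B + γ(B ∧ C)` with `γ(B ∧ C) ∈ {0, 1}`, which is the forbidden pattern; and
then both trees have the same height, so the imbalance values outside the subtree do not change
and the rotated-back tree stays balanced. -/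

lemma Balanced.subtreeAt {T : BTree} (hT : Balanced T) {p : List Bool} {S : BTree}
    (h : subtreeAt T p = some S) : Balanced S := by
  induction T generalizing p with
  | leaf =>
    cases p with
    | nil => cases h; trivial
    | cons b q => cases h
  | node l r ihl ihr =>
    cases p with
    | nil => cases h; exact hT
    | cons b q =>
      cases b
      · exact ihl hT.2.1 h
      · exact ihr hT.2.2 h

lemma RotAt.exists_subtreeAt {T0 T : BTree} {p : List Bool} (h : RotAt T0 p T) :
    ∃ A B C, subtreeAt T0 p = some (node (node A B) C) ∧
      subtreeAt T p = some (node A (node B C)) := by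
  induction h with
  | here a b c => exact ⟨a, b, c, rfl, rfl⟩
  | left _ _ ih => exact ih
  | right _ _ ih => exact ih

lemma exists_rotAt_of_subtreeAt {T : BTree} {p : List Bool} {A B C : BTree}
    (h : subtreeAt T p = some (node A (node B C))) :
    ∃ T0, RotAt T0 p T ∧ subtreeAt T0 p = some (node (node A B) C) := by
  induction T generalizing p with
  | leaf => cases p <;> cases h
  | node l r ihl ihr =>
    cases p with
    | nil =>
      cases h
      exact ⟨_, RotAt.here A B C, rfl⟩
    | cons b q =>
      cases b
      · obtain ⟨l0, hrot, hsub⟩ := ihl h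
        exact ⟨node l0 r, RotAt.left r hrot, hsub⟩
      · obtain ⟨r0, hrot, hsub⟩ := ihr h
        exact ⟨node l r0, RotAt.right l hrot, hsub⟩

lemma ht_rotation_eq {A B C : BTree} (h0 : Balanced (node (node A B) C))
    (h1 : Balanced (node A (node B C))) :
    ht (node (node A B) C) = ht (node A (node B C)) := by
  simp only [Balanced, ht] at h0 h1 ⊢
  omega

lemma balanced_rotation_iff {A B C : BTree} (h : Balanced (node A (node B C))) :
    Balanced (node (node A B) C) ↔
      ((imb (node A (node B C)), imb (node B C)) = (1, 1) ∨
       (imb (node A (node B C)), imb (node B C)) = (1, 0)) := by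
  obtain ⟨hroot, hA, hBC, hB, hC⟩ := h
  simp only [Balanced, imb, ht, Prod.mk.injEq] at hroot hBC ⊢
  constructor
  · rintro ⟨hroot0, hAB, -⟩
    omega
  · intro hpat
    exact ⟨by omega, ⟨by omega, hA, hB⟩, hC⟩

lemma RotAt.balanced_of_subtreeAt {T0 T : BTree} {p : List Bool} (h : RotAt T0 p T)
    (hT : Balanced T) {S0 : BTree} (hS0 : subtreeAt T0 p = some S0) (hbal : Balanced S0) :
    Balanced T0 ∧ ht T0 = ht T := by
  induction h with
  | here a b c =>
    cases hS0
    exact ⟨hbal, ht_rotation_eq hbal hT⟩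
  | left r _ ih =>
    obtain ⟨hl, hht⟩ := ih hT.2.1 hS0
    refine ⟨⟨?_, hl, hT.2.2⟩, ?_⟩
    · rw [hht]; exact hT.1
    · simp only [ht, hht]
  | right l _ ih =>
    obtain ⟨hr, hht⟩ := ih hT.2.2 hS0
    refine ⟨⟨?_, hT.2.1, hr⟩, ?_⟩
    · rw [hht]; exact hT.1
    · simp only [ht, hht]

/-- A balanced tree `T` is minimal (every tree giving `T` by a right rotation is
unbalanced) iff `T` has no node `x` whose right child `y` satisfies
`(γ_T(x), γ_T(y)) ∈ {(1, 1), (1, 0)}`. -/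
theorem minimal_iff_avoids (T : BTree) (hT : Balanced T) :
    (∀ T0 : BTree, Rot T0 T → ¬ Balanced T0) ↔
      ¬ ∃ (p : List Bool) (A B C : BTree),
          subtreeAt T p = some (node A (node B C)) ∧
          ((imb (node A (node B C)), imb (node B C)) = (1, 1) ∨
           (imb (node A (node B C)), imb (node B C)) = (1, 0)) := by
  rw [iff_not_comm]
  push Not
  constructor
  · rintro ⟨p, A, B, C, hsub, hpat⟩
    obtain ⟨T0, hrot, hsub0⟩ := exists_rotAt_of_subtreeAt hsub
    have hbal0 := (balanced_rotation_iff (hT.subtreeAt hsub)).mpr hpat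
    exact ⟨T0, ⟨p, hrot⟩, (hrot.balanced_of_subtreeAt hT hsub0 hbal0).1⟩
  · rintro ⟨T0, ⟨p, hrot⟩, hT0⟩
    obtain ⟨A, B, C, hsub0, hsub⟩ := hrot.exists_subtreeAt
    exact ⟨p, A, B, C, hsub,
      (balanced_rotation_iff (hT.subtreeAt hsub)).mp (hT0.subtreeAt hsub0)⟩

end BTree
end

section
/- Let T0 and T1 be two balanced trees such that T0 ≼ T1 in the Tamari order. Then there exists k ≥ 0 such that the interval [T0, T1] = {T : T0 ≼ T ≼ T1}, partially ordered by ≼, is order-isomorphic to the poset of all subsets of a k-element set ordered by inclusion (the hypercube poset of dimension k). -/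
namespace BTree

def numLeaves : BTree → ℕ
  | leaf => 1
  | node l r => numLeaves l + numLeaves r

def leftNumLeaves : BTree → ℕ
  | leaf => 0
  | node l _ => numLeaves l

theorem numLeaves_pos : ∀ t : BTree, 0 < numLeaves t
  | leaf => Nat.one_pos
  | node l _ => Nat.add_pos_left (numLeaves_pos l) _

theorem one_lt_numLeaves_node (l r : BTree) : 1 < numLeaves (node l r) :=
  Nat.add_le_add (numLeaves_pos l) (numLeaves_pos r)

namespace RotAt

theorem numLeaves_eq {t t' : BTree} {p : List Bool} (h : RotAt t p t') :
    numLeaves t' = numLeaves t := by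
  induction h with
  | here => simp only [numLeaves]; ring
  | left _ _ ih | right _ _ ih => simp only [numLeaves, ih]

theorem leftNumLeaves_le {t t' : BTree} {p : List Bool} (h : RotAt t p t') :
    leftNumLeaves t' ≤ leftNumLeaves t := by
  cases h with
  | here => exact Nat.le_add_right _ _
  | left _ h => exact h.numLeaves_eq.le
  | right => exact le_rfl

end RotAt

namespace Tamari

theorem refl (t : BTree) : Tamari t t := Relation.ReflTransGen.refl

theorem trans {s t u : BTree} (h₁ : Tamari s t) (h₂ : Tamari t u) : Tamari s u :=
  Relation.ReflTransGen.trans h₁ h₂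

theorem numLeaves_eq {s t : BTree} (h : Tamari s t) : numLeaves t = numLeaves s := by
  induction h with
  | refl => rfl
  | tail _ hrot ih => exact hrot.choose_spec.numLeaves_eq.trans ih

theorem leftNumLeaves_le {s t : BTree} (h : Tamari s t) : leftNumLeaves t ≤ leftNumLeaves s := by
  induction h with
  | refl => exact le_rfl
  | tail _ hrot ih => exact hrot.choose_spec.leftNumLeaves_le.trans ih

theorem eq_leaf {t : BTree} (h : Tamari leaf t) : t = leaf := by
  cases t with
  | leaf => rfl
  | node l r => exact absurd h.numLeaves_eq (one_lt_numLeaves_node l r).ne'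

theorem exists_eq_node {l r t : BTree} (h : Tamari (node l r) t) : ∃ l' r', t = node l' r' := by
  cases t with
  | leaf => exact absurd h.numLeaves_eq (one_lt_numLeaves_node l r).ne
  | node l' r' => exact ⟨l', r', rfl⟩

theorem node_congr {l l' r r' : BTree} (hl : Tamari l l') (hr : Tamari r r') :
    Tamari (node l r) (node l' r') :=
  trans (hl.lift (node · r) fun _ _ ⟨p, h⟩ => ⟨false :: p, .left r h⟩)
    (hr.lift (node l') fun _ _ ⟨p, h⟩ => ⟨true :: p, .right l' h⟩)

theorem rotate (a b c : BTree) : Tamari (node (node a b) c) (node a (node b c)) :=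
  Relation.ReflTransGen.single ⟨[], .here a b c⟩

theorem node_cases {L R T : BTree} (h : Tamari (node L R) T) :
    (∃ L' R', T = node L' R' ∧ Tamari L L' ∧ Tamari R R') ∨
      ∃ A B R', Tamari L (node A B) ∧ Tamari R R' ∧ Tamari (node A (node B R')) T := by
  generalize hs : node L R = s at h
  induction h using Relation.ReflTransGen.head_induction_on generalizing L R with
  | refl => exact .inl ⟨L, R, hs.symm, refl L, refl R⟩
  | head hrot htail ih =>
    subst hs
    obtain ⟨p, hrot⟩ := hrot
    cases hrot with
    | here a b => exact .inr ⟨a, b, _, refl _, refl _, htail⟩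
    | left r hl =>
      have hl : Tamari L _ := .single ⟨_, hl⟩
      rcases ih rfl with ⟨L', R', rfl, h₁, h₂⟩ | ⟨A, B, R', h₁, h₂, h₃⟩
      · exact .inl ⟨L', R', rfl, hl.trans h₁, h₂⟩
      · exact .inr ⟨A, B, R', hl.trans h₁, h₂, h₃⟩
    | right l hr =>
      have hr : Tamari R _ := .single ⟨_, hr⟩
      rcases ih rfl with ⟨L', R', rfl, h₁, h₂⟩ | ⟨A, B, R', h₁, h₂, h₃⟩
      · exact .inl ⟨L', R', rfl, h₁, hr.trans h₂⟩
      · exact .inr ⟨A, B, R', h₁, hr.trans h₂, h₃⟩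

end Tamari

theorem tamari_node_iff {L L' R R' : BTree} (hL : numLeaves L = numLeaves L') :
    Tamari (node L R) (node L' R') ↔ Tamari L L' ∧ Tamari R R' := by
  refine ⟨fun h => ?_, fun h => h.1.node_congr h.2⟩
  rcases h.node_cases with ⟨_, _, he, h₁, h₂⟩ | ⟨A, B, _, h₁, -, h₃⟩
  · cases he; exact ⟨h₁, h₂⟩
  · have h₁ := h₁.numLeaves_eq
    have h₃ := h₃.leftNumLeaves_le
    simp only [numLeaves, leftNumLeaves] at h₁ h₃
    have := numLeaves_pos B
    omega

theorem numLeaves_eq_or_le_of_tamari {P Q R L' W : BTree}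
    (h : Tamari (node (node P Q) R) (node L' W)) :
    numLeaves L' = numLeaves P + numLeaves Q ∨ numLeaves L' ≤ numLeaves P := by
  rcases h.node_cases with ⟨_, _, he, h₁, -⟩ | ⟨A, B, _, h₁, -, h₃⟩
  · cases he; exact .inl h₁.numLeaves_eq
  · exact .inr (h₃.leftNumLeaves_le.trans h₁.leftNumLeaves_le)

theorem tamari_rotate_of_numLeaves_eq {P Q R L' W : BTree} (hP : numLeaves L' = numLeaves P)
    (h : Tamari (node (node P Q) R) (node L' W)) :
    Tamari P L' ∧ ∃ Q' R', Tamari Q Q' ∧ Tamari R R' ∧ Tamari (node Q' R') W := by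
  rcases h.node_cases with ⟨_, _, he, h₁, -⟩ | ⟨A, B, R', h₁, h₂, h₃⟩
  · cases he
    have := h₁.numLeaves_eq
    simp only [numLeaves] at this
    have := numLeaves_pos Q
    omega
  · have hA : numLeaves A = numLeaves P := by
      have := h₁.leftNumLeaves_le; have := h₃.leftNumLeaves_le
      simp only [leftNumLeaves] at *
      omega
    obtain ⟨hPA, hQB⟩ := (tamari_node_iff hA.symm).1 h₁
    obtain ⟨hAL, hW⟩ := (tamari_node_iff (hA.trans hP.symm)).1 h₃
    exact ⟨hPA.trans hAL, B, R', hQB, h₂, hW⟩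

theorem tamari_rotate_iff {P Q R P' Q' R' : BTree} (hP : numLeaves P = numLeaves P')
    (hQ : numLeaves Q = numLeaves Q') :
    Tamari (node (node P Q) R) (node P' (node Q' R')) ↔
      Tamari P P' ∧ Tamari Q Q' ∧ Tamari R R' := by
  refine ⟨fun h => ?_, fun ⟨hP, hQ, hR⟩ =>
    ((hP.node_congr hQ).node_congr hR).trans (.rotate _ _ _)⟩
  obtain ⟨hPP', Q'', R'', hQ'', hR'', hW⟩ := tamari_rotate_of_numLeaves_eq hP.symm h
  obtain ⟨hQ''Q', hR''R'⟩ := (tamari_node_iff (hQ''.numLeaves_eq.trans hQ)).1 hW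
  exact ⟨hPP', hQ''.trans hQ''Q', hR''.trans hR''R'⟩

theorem not_tamari_unrotate {P Q R P' Q' R' : BTree} (hP : numLeaves P = numLeaves P') :
    ¬ Tamari (node P (node Q R)) (node (node P' Q') R') := fun h => by
  have := h.leftNumLeaves_le
  simp only [leftNumLeaves, numLeaves] at this
  have := numLeaves_pos Q'
  omega

/-- `OnLeftSpine t x`: `t = (⋯((x ∧ r₁) ∧ r₂) ⋯) ∧ rₙ`. -/
inductive OnLeftSpine : BTree → BTree → Prop
  | refl (t : BTree) : OnLeftSpine t t
  | step {l x : BTree} (r : BTree) : OnLeftSpine l x → OnLeftSpine (node l r) x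

/-- `OnRightSpine t z`: `t = l₁ ∧ (l₂ ∧ ⋯ (lₙ ∧ z)⋯)`. -/
inductive OnRightSpine : BTree → BTree → Prop
  | refl (t : BTree) : OnRightSpine t t
  | step (l : BTree) {r z : BTree} : OnRightSpine r z → OnRightSpine (node l r) z

namespace OnLeftSpine

theorem eq_or_ht_lt {t x : BTree} (h : OnLeftSpine t x) : x = t ∨ x.ht < t.ht := by
  induction h with
  | refl => exact .inl rfl
  | step r _ ih => exact .inr (by rcases ih with rfl | ih <;> simp only [ht] <;> omega)

theorem ht_le {t x : BTree} (h : OnLeftSpine t x) : x.ht ≤ t.ht :=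
  h.eq_or_ht_lt.elim (fun h => h ▸ le_rfl) le_of_lt

theorem balanced {t x : BTree} (h : OnLeftSpine t x) (hb : Balanced t) : Balanced x := by
  induction h with
  | refl => exact hb
  | step _ _ ih => exact ih hb.2.1

theorem exists_of_rotAt {t t' x' : BTree} {p : List Bool} (h : RotAt t p t')
    (hx : OnLeftSpine t' x') :
    ∃ x, OnLeftSpine t x ∧ numLeaves x = numLeaves x' ∧ Tamari x x' := by
  induction h with
  | here a b c =>
    cases hx with
    | refl => exact ⟨_, refl _, by simp only [numLeaves]; ring, .rotate a b c⟩
    | step _ hx => exact ⟨x', (hx.step _).step _, rfl, .refl _⟩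
  | left r h ih =>
    cases hx with
    | refl => exact ⟨_, refl _, h.left r |>.numLeaves_eq.symm, .single ⟨_, h.left r⟩⟩
    | step _ hx =>
      obtain ⟨x, hx, hsz, hxx'⟩ := ih hx
      exact ⟨x, hx.step r, hsz, hxx'⟩
  | right l h =>
    cases hx with
    | refl => exact ⟨_, refl _, h.right l |>.numLeaves_eq.symm, .single ⟨_, h.right l⟩⟩
    | step _ hx => exact ⟨x', hx.step _, rfl, .refl _⟩

theorem exists_of_tamari {t t' x' : BTree} (h : Tamari t t') (hx : OnLeftSpine t' x') :
    ∃ x, OnLeftSpine t x ∧ numLeaves x = numLeaves x' ∧ Tamari x x' := by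
  induction h generalizing x' with
  | refl => exact ⟨x', hx, rfl, .refl _⟩
  | tail _ hrot ih =>
    obtain ⟨y, hy, hsz, hyx'⟩ := exists_of_rotAt hrot.choose_spec hx
    obtain ⟨x, hx, hsz', hxy⟩ := ih hy
    exact ⟨x, hx, hsz'.trans hsz, hxy.trans hyx'⟩

end OnLeftSpine

namespace OnRightSpine

theorem eq_or_ht_lt {t z : BTree} (h : OnRightSpine t z) : z = t ∨ z.ht < t.ht := by
  induction h with
  | refl => exact .inl rfl
  | step l _ ih => exact .inr (by rcases ih with rfl | ih <;> simp only [ht] <;> omega)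

theorem ht_le {t z : BTree} (h : OnRightSpine t z) : z.ht ≤ t.ht :=
  h.eq_or_ht_lt.elim (fun h => h ▸ le_rfl) le_of_lt

theorem balanced {t z : BTree} (h : OnRightSpine t z) (hb : Balanced t) : Balanced z := by
  induction h with
  | refl => exact hb
  | step _ _ ih => exact ih hb.2.2

theorem exists_of_rotAt {t t' z : BTree} {p : List Bool} (h : RotAt t p t')
    (hz : OnRightSpine t z) :
    ∃ z', OnRightSpine t' z' ∧ numLeaves z' = numLeaves z ∧ Tamari z z' := by
  induction h with
  | here a b c =>
    cases hz with
    | refl => exact ⟨_, refl _, by simp only [numLeaves]; ring, .rotate a b c⟩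
    | step _ hz => exact ⟨z, (hz.step _).step _, rfl, .refl _⟩
  | left r h =>
    cases hz with
    | refl => exact ⟨_, refl _, h.left r |>.numLeaves_eq, .single ⟨_, h.left r⟩⟩
    | step _ hz => exact ⟨z, hz.step _, rfl, .refl _⟩
  | right l h ih =>
    cases hz with
    | refl => exact ⟨_, refl _, h.right l |>.numLeaves_eq, .single ⟨_, h.right l⟩⟩
    | step _ hz =>
      obtain ⟨z', hz', hsz, hzz'⟩ := ih hz
      exact ⟨z', hz'.step l, hsz, hzz'⟩

theorem exists_of_tamari {t t' z : BTree} (h : Tamari t t') (hz : OnRightSpine t z) :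
    ∃ z', OnRightSpine t' z' ∧ numLeaves z' = numLeaves z ∧ Tamari z z' := by
  induction h with
  | refl => exact ⟨z, hz, rfl, .refl _⟩
  | tail _ hrot ih =>
    obtain ⟨y, hy, hsz, hzy⟩ := ih
    obtain ⟨z', hz', hsz', hyz'⟩ := exists_of_rotAt hrot.choose_spec hy
    exact ⟨z', hz', hsz'.trans hsz, hzy.trans hyz'⟩

end OnRightSpine

end BTree

def IsHypercube (α : Type*) [Preorder α] : Prop :=
  ∃ k : ℕ, Nonempty (α ≃o Finset (Fin k))

namespace IsHypercube

variable {α β : Type*} [Preorder α] [Preorder β]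

theorem of_unique [Unique α] : IsHypercube α := ⟨0, ⟨OrderIso.ofUnique _ _⟩⟩

theorem bool : IsHypercube Bool :=
  ⟨1, ⟨{ toFun := fun b => if b then {0} else ∅
         invFun := fun s => decide (0 ∈ s)
         left_inv := by decide
         right_inv := by decide
         map_rel_iff' := by decide }⟩⟩

theorem of_orderIso (e : α ≃o β) (h : IsHypercube β) : IsHypercube α :=
  let ⟨k, ⟨f⟩⟩ := h; ⟨k, ⟨e.trans f⟩⟩

theorem prod (hα : IsHypercube α) (hβ : IsHypercube β) : IsHypercube (α × β) := by
  obtain ⟨m, ⟨e⟩⟩ := hα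
  obtain ⟨n, ⟨f⟩⟩ := hβ
  refine ⟨m + n, ⟨{ toEquiv := ((e.toEquiv.prodCongr f.toEquiv).trans
    Finset.sumEquiv.symm.toEquiv).trans finSumFinEquiv.finsetCongr, map_rel_iff' := ?_ }⟩⟩
  intro x y
  simp [Equiv.finsetCongr_apply, Finset.map_subset_map, Finset.disjSum_subset, Prod.le_def]

end IsHypercube

namespace BTree

def TamariInterval (s t : BTree) : Type := {T : BTree // Tamari s T ∧ Tamari T t}

instance (s t : BTree) : Preorder (TamariInterval s t) where
  le a b := Tamari a.1 b.1
  le_refl a := .refl a.1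
  le_trans _ _ _ := Tamari.trans

theorem TamariInterval.numLeaves_eq {s t : BTree} (x : TamariInterval s t) :
    numLeaves x.1 = numLeaves s :=
  x.2.1.numLeaves_eq

instance : Unique (TamariInterval leaf leaf) where
  default := ⟨leaf, .refl _, .refl _⟩
  uniq x := Subtype.ext x.2.1.eq_leaf

section NodeInterval

variable {L L' R R' : BTree}

def nodeIntervalMap (x : TamariInterval L L' × TamariInterval R R') :
    TamariInterval (node L R) (node L' R') :=
  ⟨node x.1.1 x.2.1, x.1.2.1.node_congr x.2.2.1, x.1.2.2.node_congr x.2.2.2⟩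

theorem nodeIntervalMap_le_iff (x y : TamariInterval L L' × TamariInterval R R') :
    nodeIntervalMap x ≤ nodeIntervalMap y ↔ x ≤ y :=
  tamari_node_iff (x.1.numLeaves_eq.trans y.1.numLeaves_eq.symm)

theorem nodeIntervalMap_injective :
    Function.Injective (nodeIntervalMap : TamariInterval L L' × TamariInterval R R' → _) :=
  fun _ _ h => by
    injection congrArg Subtype.val h with h₁ h₂
    exact Prod.ext (Subtype.ext h₁) (Subtype.ext h₂)

theorem nodeIntervalMap_surjective (hL : numLeaves L = numLeaves L') :
    Function.Surjective (nodeIntervalMap : TamariInterval L L' × TamariInterval R R' → _) := by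
  rintro ⟨T, h₀, h₁⟩
  obtain ⟨LT, RT, rfl⟩ := h₀.exists_eq_node
  have hLT : numLeaves L = numLeaves LT := by
    have := h₀.leftNumLeaves_le; have := h₁.leftNumLeaves_le
    simp only [leftNumLeaves] at *
    omega
  obtain ⟨hL₀, hR₀⟩ := (tamari_node_iff hLT).1 h₀
  obtain ⟨hL₁, hR₁⟩ := (tamari_node_iff (hLT.symm.trans hL)).1 h₁
  exact ⟨(⟨LT, hL₀, hL₁⟩, ⟨RT, hR₀, hR₁⟩), rfl⟩

noncomputable def nodeIntervalIso (hL : numLeaves L = numLeaves L') :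
    TamariInterval L L' × TamariInterval R R' ≃o TamariInterval (node L R) (node L' R') where
  toEquiv := .ofBijective _ ⟨nodeIntervalMap_injective, nodeIntervalMap_surjective hL⟩
  map_rel_iff' := nodeIntervalMap_le_iff _ _

end NodeInterval

section RotateInterval

variable {A B C A' B' C' : BTree}

/-- The `Bool` records whether the root has been rotated. -/
def rotateIntervalMap :
    Bool × TamariInterval A A' × TamariInterval B B' × TamariInterval C C' →
      TamariInterval (node (node A B) C) (node A' (node B' C'))
  | (false, P, Q, R) => ⟨node (node P.1 Q.1) R.1, (P.2.1.node_congr Q.2.1).node_congr R.2.1,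
      ((P.2.2.node_congr Q.2.2).node_congr R.2.2).trans (.rotate _ _ _)⟩
  | (true, P, Q, R) => ⟨node P.1 (node Q.1 R.1),
      (Tamari.rotate _ _ _).trans (P.2.1.node_congr (Q.2.1.node_congr R.2.1)),
      P.2.2.node_congr (Q.2.2.node_congr R.2.2)⟩

theorem rotateIntervalMap_le_iff
    (x y : Bool × TamariInterval A A' × TamariInterval B B' × TamariInterval C C') :
    rotateIntervalMap x ≤ rotateIntervalMap y ↔ x ≤ y := by
  obtain ⟨b, P, Q, R⟩ := x
  obtain ⟨b', P', Q', R'⟩ := y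
  have hP := P.numLeaves_eq.trans P'.numLeaves_eq.symm
  have hQ := Q.numLeaves_eq.trans Q'.numLeaves_eq.symm
  have hPQ : numLeaves (node P.1 Q.1) = numLeaves (node P'.1 Q'.1) := by
    simp only [numLeaves, hP, hQ]
  simp only [Prod.mk_le_mk]
  cases b <;> cases b'
  · exact (tamari_node_iff hPQ).trans (and_congr_left' (tamari_node_iff hP)) |>.trans
      (by simp only [le_refl, true_and, and_assoc]; rfl)
  · exact (tamari_rotate_iff hP hQ).trans (by simp only [Bool.false_le, true_and]; rfl)
  · exact iff_of_false (not_tamari_unrotate hP) (by simp)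
  · exact (tamari_node_iff hP).trans (and_congr_right' (tamari_node_iff hQ)) |>.trans
      (by simp only [le_refl, true_and]; rfl)

theorem rotateIntervalMap_injective :
    Function.Injective (rotateIntervalMap :
      Bool × TamariInterval A A' × TamariInterval B B' × TamariInterval C C' → _) := by
  rintro ⟨b, P, Q, R⟩ ⟨b', P', Q', R'⟩ h
  have h := congrArg Subtype.val h
  have hP := P.numLeaves_eq.trans P'.numLeaves_eq.symm
  have := numLeaves_pos Q.1; have := numLeaves_pos Q'.1
  cases b <;> cases b' <;> simp only [rotateIntervalMap, node.injEq] at h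
  · obtain ⟨⟨hP, hQ⟩, hR⟩ := h
    rw [Subtype.ext hP, Subtype.ext hQ, Subtype.ext hR]
  · have := congrArg numLeaves h.1; simp only [numLeaves] at this; omega
  · have := congrArg numLeaves h.1; simp only [numLeaves] at this; omega
  · obtain ⟨hP, hQ, hR⟩ := h
    rw [Subtype.ext hP, Subtype.ext hQ, Subtype.ext hR]

theorem rotateIntervalMap_surjective (hA : numLeaves A = numLeaves A')
    (hB : numLeaves B = numLeaves B') :
    Function.Surjective (rotateIntervalMap :
      Bool × TamariInterval A A' × TamariInterval B B' × TamariInterval C C' → _) := by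
  rintro ⟨T, h₀, h₁⟩
  obtain ⟨LT, RT, rfl⟩ := h₀.exists_eq_node
  have hA' := h₁.leftNumLeaves_le
  simp only [leftNumLeaves] at hA'
  rcases numLeaves_eq_or_le_of_tamari h₀ with hLT | hLT
  · obtain ⟨hAB, hC⟩ := (tamari_node_iff (L := node A B) hLT.symm).1 h₀
    obtain ⟨P, Q, rfl⟩ := hAB.exists_eq_node
    have hP : numLeaves A = numLeaves P := by
      have := hAB.leftNumLeaves_le
      have := numLeaves_pos B
      rcases numLeaves_eq_or_le_of_tamari h₁ with h | h <;>
        simp only [leftNumLeaves, numLeaves] at * <;> omega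
    obtain ⟨hAP, hBQ⟩ := (tamari_node_iff hP).1 hAB
    obtain ⟨hPA', hQB', hRC'⟩ :=
      (tamari_rotate_iff (hP.symm.trans hA) (hBQ.numLeaves_eq.trans hB)).1 h₁
    exact ⟨(false, ⟨P, hAP, hPA'⟩, ⟨Q, hBQ, hQB'⟩, ⟨RT, hC, hRC'⟩), rfl⟩
  · have hLT : numLeaves A = numLeaves LT := by omega
    obtain ⟨hLA', hRT⟩ := (tamari_node_iff (hLT.symm.trans hA)).1 h₁
    obtain ⟨-, Q'', R'', hBQ'', -, hW⟩ := tamari_rotate_of_numLeaves_eq hLT.symm h₀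
    obtain ⟨Q, R, rfl⟩ := hW.exists_eq_node
    have hQ : numLeaves B = numLeaves Q := by
      have := hW.leftNumLeaves_le; have := hRT.leftNumLeaves_le; have := hBQ''.numLeaves_eq
      simp only [leftNumLeaves] at *
      omega
    obtain ⟨hAL, hBQ, hCR⟩ := (tamari_rotate_iff hLT hQ).1 h₀
    obtain ⟨hQB', hRC'⟩ := (tamari_node_iff (hQ.symm.trans hB)).1 hRT
    exact ⟨(true, ⟨LT, hAL, hLA'⟩, ⟨Q, hBQ, hQB'⟩, ⟨R, hCR, hRC'⟩), rfl⟩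

noncomputable def rotateIntervalIso (hA : numLeaves A = numLeaves A')
    (hB : numLeaves B = numLeaves B') :
    Bool × TamariInterval A A' × TamariInterval B B' × TamariInterval C C' ≃o
      TamariInterval (node (node A B) C) (node A' (node B' C')) where
  toEquiv := .ofBijective _ ⟨rotateIntervalMap_injective, rotateIntervalMap_surjective hA hB⟩
  map_rel_iff' := rotateIntervalMap_le_iff _ _

end RotateInterval

theorem Balanced.ht_le_ht_add_one {l r : BTree} (h : Balanced (node l r)) :
    r.ht ≤ l.ht + 1 ∧ l.ht ≤ r.ht + 1 := by
  rcases h.1 with h | h | h <;> omega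

/-- Pull `L'` back to some `X` on the left spine of `A`, push `C` forward to some `Z` on the
right spine of `R' = B' ∧ C'`; balance gives `ht A ≤ ht C = ht Z ≤ ht C' ≤ ht L' = ht X ≤ ht A`,
forcing `X = A` and `Z = C'`. Heights are assumed Tamari-invariant only below the size of the
source, so that this serves inside the induction proving that they are. -/
theorem Balanced.exists_of_tamari_rotate {A B C L' R' : BTree}
    (h₀ : Balanced (node (node A B) C)) (h₁ : Balanced (node L' R'))
    (hht : ∀ ⦃s t : BTree⦄, numLeaves s < numLeaves (node (node A B) C) →
      Balanced s → Balanced t → Tamari s t → s.ht = t.ht)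
    (h : Tamari (node (node A B) C) (node L' R'))
    (hlt : numLeaves L' < numLeaves A + numLeaves B) :
    ∃ B' C', R' = node B' C' ∧ Tamari A L' ∧ Tamari B B' ∧ Tamari C C' := by
  obtain ⟨X, hX, hXsz, hXL'⟩ := (OnLeftSpine.refl L').step R' |>.exists_of_tamari h
  obtain ⟨Z, hZ, hZsz, hCZ⟩ := (OnRightSpine.refl C).step (node A B) |>.exists_of_tamari h
  have hsz := h.numLeaves_eq
  have := numLeaves_pos B
  simp only [numLeaves] at hsz
  replace hX : OnLeftSpine A X := by
    rcases hX with _ | ⟨_, _ | ⟨_, hX⟩⟩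
    · simp only [numLeaves] at hXsz; omega
    · simp only [numLeaves] at hXsz; omega
    · exact hX
  obtain ⟨B', C', rfl, hZC'⟩ : ∃ B' C', R' = node B' C' ∧ OnRightSpine C' Z := by
    rcases hZ with _ | ⟨_, _ | ⟨_, hZ⟩⟩
    · simp only [numLeaves] at hZsz; omega
    · omega
    · exact ⟨_, _, rfl, hZ⟩
  have hXL'ht := hht (by simp only [numLeaves]; omega) (hX.balanced h₀.2.1.2.1) h₁.2.1 hXL'
  have hCZht := hht (by simp only [numLeaves]; omega) h₀.2.2 (hZC'.balanced h₁.2.2.2.2) hCZ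
  have := hX.ht_le
  have := hZC'.ht_le
  have hb₀ := h₀.ht_le_ht_add_one
  have hb₁ := h₁.ht_le_ht_add_one
  simp only [ht] at hb₀ hb₁
  obtain rfl : X = A := hX.eq_or_ht_lt.resolve_right (by omega)
  obtain rfl : Z = C' := hZC'.eq_or_ht_lt.resolve_right (by omega)
  obtain ⟨hAL', Q, R, hBQ, hCR, hW⟩ := tamari_rotate_of_numLeaves_eq hXsz.symm h
  have hQ : numLeaves Q = numLeaves B' := by
    have := hBQ.numLeaves_eq; have := hW.numLeaves_eq; simp only [numLeaves] at *; omega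
  obtain ⟨hQB', -⟩ := (tamari_node_iff hQ).1 hW
  exact ⟨B', _, rfl, hAL', hBQ.trans hQB', hCZ⟩

theorem Balanced.ht_eq_of_tamari {s t : BTree} (h₀ : Balanced s) (h₁ : Balanced t)
    (h : Tamari s t) : s.ht = t.ht := by
  induction hn : numLeaves s using Nat.strong_induction_on generalizing s t with
  | _ n ih =>
  obtain _ | ⟨L, R⟩ := s
  · rw [h.eq_leaf]
  obtain ⟨L', R', rfl⟩ := h.exists_eq_node
  have hht : ∀ ⦃s t : BTree⦄, numLeaves s < numLeaves (node L R) →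
      Balanced s → Balanced t → Tamari s t → s.ht = t.ht :=
    fun s t hlt hs ht' h => ih _ (hn ▸ hlt) hs ht' h rfl
  have := numLeaves_pos L; have := numLeaves_pos R
  rcases h.leftNumLeaves_le.eq_or_lt with hL | hL
  · obtain ⟨hLL', hRR'⟩ := (tamari_node_iff hL.symm).1 h
    simp only [ht, hht (by simp only [numLeaves]; omega) h₀.2.1 h₁.2.1 hLL',
      hht (by simp only [numLeaves]; omega) h₀.2.2 h₁.2.2 hRR']
  obtain _ | ⟨A, B⟩ := L
  · have := numLeaves_pos L'; simp only [leftNumLeaves, numLeaves] at hL; omega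
  obtain ⟨B', C', rfl, hA, hB, hC⟩ := h₀.exists_of_tamari_rotate h₁ hht h hL
  have := numLeaves_pos A; have := numLeaves_pos B
  have hA := hht (by simp only [numLeaves]; omega) h₀.2.1.2.1 h₁.2.1 hA
  have hB := hht (by simp only [numLeaves]; omega) h₀.2.1.2.2 h₁.2.2.2.1 hB
  have hC := hht (by simp only [numLeaves]; omega) h₀.2.2 h₁.2.2.2.2 hC
  have hb₀ := h₀.ht_le_ht_add_one; have hb₁ := h₁.ht_le_ht_add_one
  have hb₀' := h₀.2.1.ht_le_ht_add_one; have hb₁' := h₁.2.2.ht_le_ht_add_one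
  -- balance on both sides forces `ht C = ht A ≥ ht B`, and both heights are `ht A + 2`
  simp only [ht] at *
  omega

theorem Balanced.isHypercube_tamariInterval {s t : BTree} (h₀ : Balanced s) (h₁ : Balanced t)
    (h : Tamari s t) : IsHypercube (TamariInterval s t) := by
  induction hn : numLeaves s using Nat.strong_induction_on generalizing s t with
  | _ n ih =>
  obtain _ | ⟨L, R⟩ := s
  · obtain rfl := h.eq_leaf
    exact .of_unique
  obtain ⟨L', R', rfl⟩ := h.exists_eq_node
  have hIH : ∀ ⦃s t : BTree⦄, numLeaves s < numLeaves (node L R) →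
      Balanced s → Balanced t → Tamari s t → IsHypercube (TamariInterval s t) :=
    fun s t hlt hs ht' h => ih _ (hn ▸ hlt) hs ht' h rfl
  have := numLeaves_pos L; have := numLeaves_pos R
  rcases h.leftNumLeaves_le.eq_or_lt with hL | hL
  · obtain ⟨hLL', hRR'⟩ := (tamari_node_iff hL.symm).1 h
    exact .of_orderIso (nodeIntervalIso hL.symm).symm
      ((hIH (by simp only [numLeaves]; omega) h₀.2.1 h₁.2.1 hLL').prod
        (hIH (by simp only [numLeaves]; omega) h₀.2.2 h₁.2.2 hRR'))
  obtain _ | ⟨A, B⟩ := L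
  · have := numLeaves_pos L'; simp only [leftNumLeaves, numLeaves] at hL; omega
  obtain ⟨B', C', rfl, hA, hB, hC⟩ :=
    h₀.exists_of_tamari_rotate h₁ (fun _ _ _ => Balanced.ht_eq_of_tamari) h hL
  have := numLeaves_pos A; have := numLeaves_pos B
  exact .of_orderIso (rotateIntervalIso hA.numLeaves_eq.symm hB.numLeaves_eq.symm).symm
    (IsHypercube.bool.prod
      ((hIH (by simp only [numLeaves]; omega) h₀.2.1.2.1 h₁.2.1 hA).prod
        ((hIH (by simp only [numLeaves]; omega) h₀.2.1.2.2 h₁.2.2.2.1 hB).prod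
          (hIH (by simp only [numLeaves]; omega) h₀.2.2 h₁.2.2.2.2 hC))))

/-- For balanced trees `T0 ≼ T1`, the interval `[T0, T1]` of the Tamari order is
order-isomorphic to the poset of all subsets of a `k`-element set ordered by
inclusion (the hypercube of dimension `k`), for some `k ≥ 0`. -/
theorem interval_iso_hypercube (T0 T1 : BTree)
    (h0 : Balanced T0) (h1 : Balanced T1) (h : Tamari T0 T1) :
    ∃ (k : ℕ) (f : {T : BTree // Tamari T0 T ∧ Tamari T T1} → Finset (Fin k)),
      Function.Bijective f ∧
      ∀ a b : {T : BTree // Tamari T0 T ∧ Tamari T T1},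
        Tamari a.1 b.1 ↔ f a ⊆ f b := by
  obtain ⟨k, ⟨e⟩⟩ := h0.isHypercube_tamariInterval h1 h
  exact ⟨k, e, e.bijective, fun a b => e.le_iff_le.symm⟩

end BTree
end

section
/- Define a sequence of polynomials A_i ∈ ℕ[x, y, z] by A_0(x, y, z) = x and A_{i+1}(x, y, z) = x + A_i(x² + xy + yz, x, xy). Then for every n ≥ 1 the coefficient of x^n in A_i(x, 0, 0) is eventually constant as i → ∞, and this eventual value equals the number of maximal balanced trees with exactly n leaves. -/
namespace BTree

/-- Number of leaves. -/
def leaves : BTree → ℕ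
  | leaf => 1
  | node l r => l.leaves + r.leaves

/-- A balanced tree is maximal if every tree obtained from it by a right
rotation is unbalanced. -/
def MaximalBalanced (T : BTree) : Prop :=
  Balanced T ∧ ∀ T1 : BTree, Rot T T1 → ¬ Balanced T1

open MvPolynomial in
/-- The sequence of polynomials `A_0(x, y, z) = x`,
`A_{i+1}(x, y, z) = x + A_i(x² + xy + yz, x, xy)`
(variables `0`, `1`, `2` are `x`, `y`, `z`). -/
noncomputable def maxSeq : ℕ → MvPolynomial (Fin 3) ℕ
  | 0 => X 0
  | i + 1 => X 0 + bind₁ ![X 0 ^ 2 + X 0 * X 1 + X 1 * X 2, X 0, X 0 * X 1] (maxSeq i)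


theorem ht_lt_leaves : ∀ T : BTree, T.ht < T.leaves
  | leaf => Nat.one_pos
  | node l r => by
      have := ht_lt_leaves l
      have := ht_lt_leaves r
      simp only [ht, leaves]
      omega

def Rigid : BTree → Prop
  | leaf => True
  | node l r =>
      Rigid l ∧ Rigid r ∧ (l.ht = r.ht ∨ l.ht + 1 = r.ht ∨ (l.ht = r.ht + 1 ∧ l.imb = 1))

instance decidableRigid : DecidablePred Rigid
  | leaf => inferInstanceAs (Decidable True)
  | node l r =>
      have := decidableRigid l
      have := decidableRigid r
      inferInstanceAs (Decidable (_ ∧ _ ∧ _))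

theorem Rigid.balanced : ∀ {T : BTree}, Rigid T → Balanced T
  | leaf, _ => trivial
  | node _ _, ⟨hl, hr, h⟩ => ⟨by omega, hl.balanced, hr.balanced⟩

theorem RotAt.not_balanced_of_rigid {T p T₁} (hrot : RotAt T p T₁) (hT : Rigid T) :
    ¬ Balanced T₁ := by
  induction hrot with
  | here a b c =>
    rintro ⟨hroot, -, hbc, -⟩
    obtain ⟨⟨-, -, hab⟩, -, hc⟩ := hT
    simp only [ht, imb] at *
    omega
  | left r _ ih => exact fun h => ih hT.1 h.2.1
  | right l _ ih => exact fun h => ih hT.2.1 h.2.2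

theorem exists_rot_balanced_of_not_rigid :
    ∀ {T : BTree}, Balanced T → ¬ Rigid T → ∃ T₁, Rot T T₁ ∧ Balanced T₁ ∧ T₁.ht = T.ht
  | leaf, _, h => (h trivial).elim
  | node l r, ⟨hroot, hl, hr⟩, h => by
    by_cases hlR : Rigid l
    · by_cases hrR : Rigid r
      · have hroot' : ¬ (l.ht = r.ht ∨ l.ht + 1 = r.ht ∨ (l.ht = r.ht + 1 ∧ l.imb = 1)) :=
          fun h' => h ⟨hlR, hrR, h'⟩
        cases l with
        | leaf => simp only [ht] at hroot hroot'; omega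
        | node a b =>
          obtain ⟨hab, ha, hb⟩ := hl
          simp only [ht, imb] at hroot hroot' hab
          refine ⟨node a (node b r), ⟨[], .here a b r⟩, ⟨?_, ha, ?_, hb, hr⟩, ?_⟩ <;>
            (try simp only [ht]) <;> omega
      · obtain ⟨r₁, ⟨p, hp⟩, hb, hh⟩ := exists_rot_balanced_of_not_rigid hr hrR
        exact ⟨node l r₁, ⟨true :: p, .right l hp⟩, ⟨by omega, hl, hb⟩, by simp only [ht, hh]⟩
    · obtain ⟨l₁, ⟨p, hp⟩, hb, hh⟩ := exists_rot_balanced_of_not_rigid hl hlR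
      exact ⟨node l₁ r, ⟨false :: p, .left r hp⟩, ⟨by omega, hb, hr⟩, by simp only [ht, hh]⟩

theorem maximalBalanced_iff_rigid {T : BTree} : MaximalBalanced T ↔ Rigid T := by
  refine ⟨fun ⟨hT, hmax⟩ => ?_,
    fun hT => ⟨hT.balanced, fun T₁ ⟨_, hrot⟩ => hrot.not_balanced_of_rigid hT⟩⟩
  by_contra h
  obtain ⟨T₁, hrot, hT₁, -⟩ := exists_rot_balanced_of_not_rigid hT h
  exact hmax T₁ hrot hT₁

open MvPolynomial Finset

def upToHt : ℕ → Finset BTree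
  | 0 => {leaf}
  | h + 1 => insert leaf (image₂ node (upToHt h) (upToHt h))

theorem node_mem_image₂_node {l r : BTree} {s t : Finset BTree} :
    node l r ∈ image₂ node s t ↔ l ∈ s ∧ r ∈ t := by
  simp [mem_image₂]

theorem mem_upToHt : ∀ {h : ℕ} {T : BTree}, T ∈ upToHt h ↔ T.ht ≤ h
  | 0, leaf | h + 1, leaf => by simp [upToHt, ht]
  | 0, node _ _ => by simp [upToHt, ht]
  | h + 1, node l r => by
      simp only [upToHt, mem_insert, reduceCtorEq, false_or, node_mem_image₂_node, mem_upToHt, ht]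
      omega

theorem disjoint_image₂_node {s s' t t' : Finset BTree} (h : Disjoint s s' ∨ Disjoint t t') :
    Disjoint (image₂ node s t) (image₂ node s' t') := by
  refine disjoint_left.2 fun T hT hT' => ?_
  obtain ⟨l, hl, r, hr, rfl⟩ := mem_image₂.1 hT
  rw [node_mem_image₂_node] at hT'
  exact h.elim (fun h => disjoint_left.1 h hl hT'.1) (fun h => disjoint_left.1 h hr hT'.2)

noncomputable def leavesGF (s : Finset BTree) : MvPolynomial ℕ ℕ := ∑ T ∈ s, X 0 ^ T.leaves

theorem leavesGF_union {s t : Finset BTree} (h : Disjoint s t) :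
    leavesGF (s ∪ t) = leavesGF s + leavesGF t :=
  sum_union h

theorem leavesGF_image₂_node (s t : Finset BTree) :
    leavesGF (image₂ node s t) = leavesGF s * leavesGF t := by
  rw [leavesGF, leavesGF, leavesGF, ← image_uncurry_product, sum_image, sum_mul_sum, sum_product]
  · simp [leaves, pow_add]
  · rintro ⟨_, _⟩ - ⟨_, _⟩ - h
    simpa using h

theorem coeff_leavesGF (s : Finset BTree) (n : ℕ) :
    coeff (Finsupp.single 0 n) (leavesGF s) = #{T ∈ s | T.leaves = n} := by
  rw [leavesGF, coeff_sum, card_filter]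
  refine sum_congr rfl fun T _ => ?_
  rw [coeff_X_pow]
  simp only [(Finsupp.single_injective 0).eq_iff]

def rigidOfHt (h : ℕ) : Finset BTree := {T ∈ upToHt h | Rigid T ∧ T.ht = h}

def rigidOfHtPred (h : ℕ) : Finset BTree := {T ∈ upToHt h | Rigid T ∧ T.ht + 1 = h}

def rigidOfHtRightHeavy (h : ℕ) : Finset BTree :=
  {T ∈ upToHt h | Rigid T ∧ T.ht = h ∧ T.imb = 1}

theorem disjoint_rigidOfHt_rigidOfHtPred (h : ℕ) :
    Disjoint (rigidOfHt h) (rigidOfHtPred h) := by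
  refine disjoint_left.2 fun T hT hT' => ?_
  simp only [rigidOfHt, rigidOfHtPred, mem_filter] at hT hT'
  omega

theorem rigidOfHtPred_succ (h : ℕ) : rigidOfHtPred (h + 1) = rigidOfHt h := by
  ext T
  simp only [rigidOfHtPred, rigidOfHt, mem_filter, mem_upToHt]
  by_cases hT : Rigid T <;> simp only [hT, true_and, false_and, and_false]
  omega

theorem rigidOfHtRightHeavy_succ (h : ℕ) :
    rigidOfHtRightHeavy (h + 1) = image₂ node (rigidOfHtPred h) (rigidOfHt h) := by
  ext (_ | ⟨l, r⟩)
  · simp [rigidOfHtRightHeavy, ht]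
  · simp only [rigidOfHtRightHeavy, rigidOfHtPred, rigidOfHt, mem_filter, mem_upToHt,
      node_mem_image₂_node]
    simp only [Rigid, ht, imb]
    by_cases hl : Rigid l <;> by_cases hr : Rigid r <;>
      simp only [hl, hr, true_and, false_and, and_false, and_self]
    omega

theorem rigidOfHt_succ (h : ℕ) : rigidOfHt (h + 1) =
    image₂ node (rigidOfHt h) (rigidOfHt h) ∪ image₂ node (rigidOfHtPred h) (rigidOfHt h) ∪
      image₂ node (rigidOfHtRightHeavy h) (rigidOfHtPred h) := by
  ext (_ | ⟨l, r⟩)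
  · simp [rigidOfHt, ht]
  · simp only [rigidOfHtRightHeavy, rigidOfHtPred, rigidOfHt, mem_union, mem_filter, mem_upToHt,
      node_mem_image₂_node, Rigid, ht]
    by_cases hl : Rigid l <;> by_cases hr : Rigid r <;>
      simp only [hl, hr, true_and, false_and, and_false, and_self, or_self]
    omega

theorem leavesGF_rigidOfHt_succ (h : ℕ) : leavesGF (rigidOfHt (h + 1)) =
    leavesGF (rigidOfHt h) ^ 2 + leavesGF (rigidOfHt h) * leavesGF (rigidOfHtPred h) +
      leavesGF (rigidOfHtPred h) * leavesGF (rigidOfHtRightHeavy h) := by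
  have hdisj := disjoint_rigidOfHt_rigidOfHtPred h
  rw [rigidOfHt_succ, leavesGF_union, leavesGF_union, leavesGF_image₂_node, leavesGF_image₂_node,
    leavesGF_image₂_node]
  · ring
  · exact disjoint_image₂_node (.inl hdisj)
  · exact disjoint_union_left.2
      ⟨disjoint_image₂_node (.inr hdisj), disjoint_image₂_node (.inr hdisj)⟩

noncomputable def maxSeqSubst : MvPolynomial (Fin 3) ℕ →ₐ[ℕ] MvPolynomial (Fin 3) ℕ :=
  bind₁ ![X 0 ^ 2 + X 0 * X 1 + X 1 * X 2, X 0, X 0 * X 1]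

theorem maxSeqSubst_X (v : Fin 3) :
    maxSeqSubst (X v) = ![X 0 ^ 2 + X 0 * X 1 + X 1 * X 2, X 0, X 0 * X 1] v :=
  bind₁_X_right _ _

theorem maxSeq_eq_sum (i : ℕ) : maxSeq i = ∑ h ∈ range (i + 1), (maxSeqSubst ^ h) (X 0) := by
  induction i with
  | zero => simp [maxSeq]
  | succ i ih =>
    rw [maxSeq, ← maxSeqSubst, ih, map_sum, sum_range_succ' _ (i + 1), pow_zero, AlgHom.one_apply,
      add_comm]
    simp only [pow_succ', AlgHom.mul_apply]

theorem bind₁_maxSeqSubst_pow_X (h : ℕ) :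
    bind₁ (![X 0, 0, 0] : Fin 3 → MvPolynomial ℕ ℕ) ((maxSeqSubst ^ h) (X 0)) =
        leavesGF (rigidOfHt h) ∧
      bind₁ (![X 0, 0, 0] : Fin 3 → MvPolynomial ℕ ℕ) ((maxSeqSubst ^ h) (X 1)) =
        leavesGF (rigidOfHtPred h) ∧
      bind₁ (![X 0, 0, 0] : Fin 3 → MvPolynomial ℕ ℕ) ((maxSeqSubst ^ h) (X 2)) =
        leavesGF (rigidOfHtRightHeavy h) := by
  induction h with
  | zero =>
    refine ⟨?_, ?_, ?_⟩ <;>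
      simp [leavesGF, rigidOfHt, rigidOfHtPred, rigidOfHtRightHeavy, upToHt, filter_singleton,
        Rigid, ht, leaves, imb.eq_1]
  | succ h ih =>
    obtain ⟨h0, h1, h2⟩ := ih
    simp only [pow_succ, AlgHom.mul_apply, maxSeqSubst_X, Matrix.cons_val_zero,
      Matrix.cons_val_one, Matrix.cons_val_two, Matrix.head_cons, Matrix.tail_cons, map_add,
      map_mul, map_pow, h0, h1, h2, leavesGF_rigidOfHt_succ, rigidOfHtPred_succ,
      rigidOfHtRightHeavy_succ, leavesGF_image₂_node]
    exact ⟨trivial, trivial, mul_comm _ _⟩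

theorem sum_leavesGF_rigidOfHt (i : ℕ) :
    ∑ h ∈ range (i + 1), leavesGF (rigidOfHt h) = leavesGF {T ∈ upToHt i | Rigid T} := by
  rw [leavesGF, ← sum_fiberwise_of_maps_to (g := ht) (t := range (i + 1))]
  · refine sum_congr rfl fun h hh => ?_
    rw [leavesGF, filter_filter]
    congr 1
    ext T
    simp only [rigidOfHt, mem_filter, mem_upToHt, mem_range] at hh ⊢
    exact and_congr_left fun ⟨_, hT⟩ => by omega
  · intro T hT
    simp only [mem_filter, mem_upToHt, mem_range] at hT ⊢
    omega

theorem card_rigid_leaves_eq_natCard_maximalBalanced {i n : ℕ} (hi : n ≤ i) :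
    #{T ∈ {T ∈ upToHt i | Rigid T} | T.leaves = n} =
      Nat.card {T : BTree // MaximalBalanced T ∧ T.leaves = n} := by
  rw [← Nat.card_eq_finsetCard]
  refine Nat.card_congr (Equiv.subtypeEquivRight fun T => ?_)
  simp only [mem_filter, mem_upToHt, maximalBalanced_iff_rigid]
  rw [and_assoc]
  exact and_iff_right_of_imp fun ⟨_, hn⟩ => by have := ht_lt_leaves T; omega

open MvPolynomial in
theorem maxSeq_coeff_eventually_counts_maximal_general (n : ℕ) :
    ∃ N : ℕ, ∀ i ≥ N,
      coeff (Finsupp.single 0 n) (bind₁ ![X 0, 0, 0] (maxSeq i)) =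
        Nat.card {T : BTree // MaximalBalanced T ∧ T.leaves = n} := by
  refine ⟨n, fun i hi => ?_⟩
  simp only [maxSeq_eq_sum, map_sum, fun h => (bind₁_maxSeqSubst_pow_X h).1,
    sum_leavesGF_rigidOfHt, coeff_leavesGF]
  exact card_rigid_leaves_eq_natCard_maximalBalanced hi

open MvPolynomial in
/-- For every `n ≥ 1`, the coefficient of `x^n` in `A_i(x, 0, 0)` is eventually
constant as `i → ∞`, and its eventual value is the number of maximal balanced
trees with exactly `n` leaves. -/
theorem maxSeq_coeff_eventually_counts_maximal (n : ℕ) (hn : 1 ≤ n) :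
    ∃ N : ℕ, ∀ i ≥ N,
      coeff (Finsupp.single 0 n) (bind₁ ![X 0, 0, 0] (maxSeq i)) =
        Nat.card {T : BTree // MaximalBalanced T ∧ T.leaves = n} :=
  maxSeq_coeff_eventually_counts_maximal_general n

end BTree
end
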